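/- Let G₁, …, Gₙ be totally ordered abelian groups with G_j = ℤ for some 1 ≤ j ≤ n, and let G = G₁ ×ₗ ⋯ ×ₗ Gₙ be their lexicographic product. Then the element e_j ∈ G (with entry 1 in position j and 0 elsewhere) lies in F_j, but e_j cannot be written as v + w with v, w ∈ F_j; in particular F_j is a filter in G⁺ that is not idempotent. -/

import Mathlib

open scoped Pointwise

universe v

noncomputable instance finPiLex (n : ℕ) (β : Fin n → Type v)
    [∀ i, AddCommGroup (β i)] [∀ i, LinearOrder (β i)]
    [∀ i, IsOrderedAddMonoid (β i)] :
    IsOrderedAddMonoid (Lex (∀ i, β i)) :=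
  letI : WellFoundedLT (Fin n) := inferInstance
  inferInstance

/-- The subset `F_j = {v ∈ G⁺ : v ≠ 0, supp v ≤ j}` of the lexicographic product. -/
def suppFilter {n : ℕ} (β : Fin n → Type v) [∀ i, AddCommGroup (β i)] [∀ i, LinearOrder (β i)]
    [∀ i, IsOrderedAddMonoid (β i)]
    (j : Fin n) : Set (Lex (∀ i, β i)) :=
  {v | 0 ≤ v ∧ ∃ i ≤ j, ofLex v i ≠ 0}

/-! The only elements of `F_j` are the positive `v` whose leading index `i` is at most `j`;
`e_j` is not a sum of two of them because each summand, being `≤ e_j`, must have leading index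
exactly `j`, and then their `j`-th entries would be two positive integers adding up to `1`. -/

namespace Pi.Lex

variable {ι : Type*} [LinearOrder ι] {β : ι → Type*}

theorem zero_lt_iff [∀ i, Zero (β i)] [∀ i, LT (β i)] {v : Lex (∀ i, β i)} :
    0 < v ↔ ∃ i, (∀ k < i, ofLex v k = 0) ∧ 0 < ofLex v i := by
  simp only [eq_comm (a := ofLex v _)]
  rfl

theorem apply_eq_zero_of_pos_of_le_toLex_single [DecidableEq ι] [∀ i, Zero (β i)]
    [∀ i, LinearOrder (β i)] {v : Lex (∀ i, β i)} {j : ι} {a : β j}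
    (hv : 0 < v) (hle : v ≤ toLex (Pi.single j a)) {k : ι} (hk : k < j) : ofLex v k = 0 := by
  obtain ⟨i, hbefore, hlead⟩ := zero_lt_iff.1 hv
  have hji : j ≤ i := by
    by_contra! hij
    have := Pi.apply_le_of_toLex (x := ofLex v) (i := i) hle fun k hk ↦ by
      rw [hbefore k hk, Pi.single_eq_of_ne (hk.trans hij).ne]
    rw [Pi.single_eq_of_ne hij.ne] at this
    exact this.not_gt hlead
  exact hbefore k (hk.trans_le hji)

end Pi.Lex

section SuppFilter

variable {n : ℕ} {β : Fin n → Type v} [∀ i, AddCommGroup (β i)] [∀ i, LinearOrder (β i)]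
  [∀ i, IsOrderedAddMonoid (β i)] {j : Fin n}

theorem mem_suppFilter_iff {v : Lex (∀ i, β i)} :
    v ∈ suppFilter β j ↔ ∃ i ≤ j, (∀ k < i, ofLex v k = 0) ∧ 0 < ofLex v i := by
  constructor
  · rintro ⟨hv, i₀, hi₀j, hi₀⟩
    have hpos : 0 < v := hv.lt_of_ne (by rintro rfl; exact hi₀ rfl)
    obtain ⟨i, hbefore, hlead⟩ := Pi.Lex.zero_lt_iff.1 hpos
    refine ⟨i, ?_, hbefore, hlead⟩
    by_contra! hji
    exact hi₀ (hbefore i₀ (hi₀j.trans_lt hji))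
  · rintro ⟨i, hij, hbefore, hlead⟩
    exact ⟨(Pi.Lex.zero_lt_iff.2 ⟨i, hbefore, hlead⟩).le, i, hij, hlead.ne'⟩

theorem toLex_single_mem_suppFilter {a : β j} (ha : 0 < a) :
    toLex (Pi.single j a) ∈ suppFilter β j :=
  mem_suppFilter_iff.2
    ⟨j, le_rfl, fun _ hk ↦ Pi.single_eq_of_ne hk.ne _, by simpa using ha⟩

theorem mem_suppFilter_of_le {v w : Lex (∀ i, β i)} (hv : v ∈ suppFilter β j) (hvw : v ≤ w) :
    w ∈ suppFilter β j := by
  obtain ⟨i, hij, hbefore, hlead⟩ := mem_suppFilter_iff.1 hv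
  refine ⟨hv.1.trans hvw, ?_⟩
  by_contra! hw
  have := Pi.apply_le_of_toLex (x := ofLex v) (y := ofLex w) (i := i) hvw fun k hk ↦ by
    rw [hbefore k hk, hw k (hk.le.trans hij)]
  rw [hw i hij] at this
  exact this.not_gt hlead

theorem apply_pos_of_mem_suppFilter_of_le_toLex_single {v : Lex (∀ i, β i)} {a : β j}
    (hv : v ∈ suppFilter β j) (hle : v ≤ toLex (Pi.single j a)) : 0 < ofLex v j := by
  obtain ⟨i, hij, hbefore, hlead⟩ := mem_suppFilter_iff.1 hv
  obtain rfl : i = j := hij.antisymm <| not_lt.1 fun hij ↦ hlead.ne' <|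
    Pi.Lex.apply_eq_zero_of_pos_of_le_toLex_single (Pi.Lex.zero_lt_iff.2 ⟨i, hbefore, hlead⟩)
      hle hij
  exact hlead

theorem toLex_single_notMem_suppFilter_add {a : β j}
    (ha : ∀ x y : β j, 0 < x → 0 < y → x + y ≠ a) :
    toLex (Pi.single j a) ∉ suppFilter β j + suppFilter β j := by
  rintro ⟨v, hv, w, hw, hsum : v + w = _⟩
  refine ha (ofLex v j) (ofLex w j)
    (apply_pos_of_mem_suppFilter_of_le_toLex_single hv (hsum ▸ le_add_of_nonneg_right hw.1))
    (apply_pos_of_mem_suppFilter_of_le_toLex_single hw (hsum ▸ le_add_of_nonneg_left hv.1)) ?_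
  have hj := congrArg (fun u : Lex (∀ i, β i) ↦ ofLex u j) hsum
  simp only [ofLex_toLex, Pi.single_eq_same] at hj
  exact hj

end SuppFilter

section IntCopy

variable {G : Type*} [AddCommGroup G] [LinearOrder G] (e : G ≃+ ℤ)
  (he : ∀ x y : G, x ≤ y ↔ e x ≤ e y)
include he

theorem pos_iff_of_addEquiv_int {x : G} : 0 < x ↔ 0 < e x := by
  rw [lt_iff_not_ge, lt_iff_not_ge, he, map_zero]

theorem addEquiv_int_symm_one_pos : 0 < e.symm 1 := by
  simp [pos_iff_of_addEquiv_int e he]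

theorem add_ne_addEquiv_int_symm_one_of_pos (x y : G) (hx : 0 < x) (hy : 0 < y) :
    x + y ≠ e.symm 1 := by
  rw [pos_iff_of_addEquiv_int e he] at hx hy
  rw [Ne, AddEquiv.eq_symm_apply, map_add]
  omega

end IntCopy

theorem statement_13_general (n : ℕ) (β : Fin n → Type v)
    [∀ i, AddCommGroup (β i)] [∀ i, LinearOrder (β i)]
    [∀ i, IsOrderedAddMonoid (β i)] (j : Fin n)
    (e : β j ≃+ ℤ) (he : ∀ x y : β j, x ≤ y ↔ e x ≤ e y) :
    toLex (Pi.single j (e.symm 1)) ∈ suppFilter β j ∧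
    (¬ ∃ v ∈ suppFilter β j, ∃ w ∈ suppFilter β j,
      toLex (Pi.single j (e.symm 1)) = v + w) ∧
    (suppFilter β j).Nonempty ∧
    (∀ v ∈ suppFilter β j, 0 ≤ v) ∧
    (∀ v ∈ suppFilter β j, ∀ w, v ≤ w → w ∈ suppFilter β j) ∧
    suppFilter β j + suppFilter β j ≠ suppFilter β j := by
  have hmem := toLex_single_mem_suppFilter (addEquiv_int_symm_one_pos e he)
  have hnotMem := toLex_single_notMem_suppFilter_add (add_ne_addEquiv_int_symm_one_of_pos e he)
  refine ⟨hmem, ?_, ⟨_, hmem⟩, fun v hv ↦ hv.1, fun v hv w ↦ mem_suppFilter_of_le hv, ?_⟩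
  · rintro ⟨v, hv, w, hw, hsum⟩
    exact hnotMem ⟨v, hv, w, hw, hsum.symm⟩
  · intro hidem
    exact hnotMem (hidem.symm ▸ hmem)

/-- Let `G₁, …, Gₙ` be totally ordered abelian groups with `G_j = ℤ` for
some `j`, and `G = G₁ ×ₗ ⋯ ×ₗ Gₙ` their lexicographic product.  Then the element `e_j`
(with entry `1` at position `j` and `0` elsewhere) lies in `F_j`, but `e_j` is not a sum of
two elements of `F_j`; in particular `F_j` is a filter in `G⁺` that is not idempotent. -/
theorem statement_13 (n : ℕ) (hn : 1 ≤ n) (β : Fin n → Type v)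
    [∀ i, AddCommGroup (β i)] [∀ i, LinearOrder (β i)]
    [∀ i, IsOrderedAddMonoid (β i)] (j : Fin n)
    (e : β j ≃+ ℤ) (he : ∀ x y : β j, x ≤ y ↔ e x ≤ e y) :
    toLex (Pi.single j (e.symm 1)) ∈ suppFilter β j ∧
    (¬ ∃ v ∈ suppFilter β j, ∃ w ∈ suppFilter β j,
      toLex (Pi.single j (e.symm 1)) = v + w) ∧
    (suppFilter β j).Nonempty ∧
    (∀ v ∈ suppFilter β j, 0 ≤ v) ∧
    (∀ v ∈ suppFilter β j, ∀ w, v ≤ w → w ∈ suppFilter β j) ∧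
    suppFilter β j + suppFilter β j ≠ suppFilter β j :=
  statement_13_general n β j e he
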